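/- Let ξ, ξ' be elements of the lattice with nonnegative coefficients, ξ = Σ n_i H_i, ξ' = Σ n'_i H_i, and let g_i^ξ = ⊕_{α(ξ)=√-1·i} g_α be the ad(ξ)-eigenspace decomposition, with p_i^ξ = ⊕_{j≤i} g_j^ξ. Then p_i^ξ ⊆ p_i^{ξ'} for all i ≥ 0 if and only if n'_j ≤ n_j for all j. -/

import Mathlib

open Finset

theorem sum_ite_eq_one_mul {ι R : Type*} [Fintype ι] [DecidableEq ι] [Semiring R] (j : ι)
    (c : ι → R) : ∑ a, (if a = j then (1 : R) else 0) * c a = c j := by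
  simp [ite_mul]

theorem sum_mul_le_max_of_nonneg_or_nonpos {ι R : Type*} [Fintype ι] [CommRing R]
    [LinearOrder R] [IsOrderedRing R] {m c c' : ι → R}
    (hm : (∀ a, 0 ≤ m a) ∨ (∀ a, m a ≤ 0)) (hc' : ∀ a, 0 ≤ c' a) (hle : ∀ a, c' a ≤ c a) :
    ∑ a, m a * c' a ≤ max (∑ a, m a * c a) 0 := by
  rcases hm with hpos | hneg
  · exact le_max_of_le_left <|
      sum_le_sum fun a _ => mul_le_mul_of_nonneg_left (hle a) (hpos a)
  · exact le_max_of_le_right <|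
      sum_nonpos fun a _ => mul_nonpos_of_nonpos_of_nonneg (hneg a) (hc' a)

/-- A root `α = Σ m_a α_a` is encoded by its coordinates `m`, and `ξ = Σ c_a H_a` by `c`, so
that `α(ξ) = √-1 Σ m_a c_a`; `p_i^ξ ⊆ p_i^{ξ'}` says that every root of `ξ`-height at most
`i` has `ξ'`-height at most `i`. -/
theorem statement12 (k : ℕ) (Δ : Finset (Fin k → ℤ))
    (hroots : ∀ m ∈ Δ, (∀ a, 0 ≤ m a) ∨ (∀ a, m a ≤ 0))
    (hsimple : ∀ j : Fin k, (fun a => if a = j then (1 : ℤ) else 0) ∈ Δ)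
    (c c' : Fin k → ℤ) (hc : ∀ a, 0 ≤ c a) (hc' : ∀ a, 0 ≤ c' a) :
    (∀ i : ℤ, 0 ≤ i → ∀ m ∈ Δ, (∑ a, m a * c a) ≤ i → (∑ a, m a * c' a) ≤ i)
      ↔ ∀ a, c' a ≤ c a := by
  constructor
  · intro h j
    have hsimple_height := h (c j) (hc j) _ (hsimple j) (sum_ite_eq_one_mul j c).le
    rwa [sum_ite_eq_one_mul] at hsimple_height
  · intro hle i hi m hm hheight
    exact (sum_mul_le_max_of_nonneg_or_nonpos (hroots m hm) hc' hle).trans (max_le hheight hi)
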